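/- Let S and O be finite nonempty sets. Let M = (r,p), M_I = (r_I,p_I), and M̂ = (r̂,p̂) be SMDP models over (S,O) with 0 ≤ r(s,o) ≤ Rmax, γ̄ := max_{s,o} ∑_{s'} p(s,o,s') < 1, γ̄_I := max_{s,o} ∑_{s'} p_I(s,o,s') < 1, ‖r − r_I‖_∞ ≤ ζ_R, and max_{s,o} ∑_{s'} |p(s,o,s') − p_I(s,o,s')| ≤ ζ_P. Let Q*, Q*_I be Bellman-optimal value functions for M and M_I; let π_I be greedy with respect to Q*_I and π̂ : S → O a deterministic policy; let V*(s) = max_o Q*(s,o), V*_{M_I}(s) = max_o Q*_I(s,o), and let V^{π̂}_M, V^{π̂}_{M_I}, V^{π_I}_M denote policy values in the indicated models. Assume ‖V^{π̂}_M‖_∞ ≤ Rmax/(1−γ̄) and that the estimation error satisfies ‖V*_{M_I} − V^{π̂}_{M_I}‖_∞ ≤ ε̂. Then ‖V* − V^{π̂}_M‖_∞ ≤ 5ζ_R/(1 − γ̄_I) + 4 Rmax ζ_P / ((1 − γ̄_I)(1 − γ̄)) + ε̂. -/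

import Mathlib

/-!
Both the true and the intent-induced model are γ-contractions of the sup norm, so two models whose
rewards differ by at most `ζR` and whose kernels differ by at most `ζP` in total variation have
fixed points (optimal values, or values of a fixed policy) within `(ζR + ζP ‖V‖∞) / (1 - γ̄_I)` of
each other, where `V` is the value in the true model, bounded by `Rmax / (1 - γ̄)`. Going from `V*`
to `V*_{M_I}` (a model change), then to `V^{π̂}_{M_I}` (at most `ε̂`), then back to `V^{π̂}_M`
(a model change) gives the bound, with room to spare in the constants.
-/

noncomputable def fmax {α : Type*} [Fintype α] [Nonempty α] (f : α → ℝ) : ℝ :=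
  Finset.univ.sup' Finset.univ_nonempty f

open Finset

section fmax

variable {α β : Type*} [Fintype α] [Nonempty α]

lemma le_fmax (f : α → ℝ) (a : α) : f a ≤ fmax f :=
  le_sup' f (mem_univ a)

lemma fmax_le {f : α → ℝ} {c : ℝ} (h : ∀ a, f a ≤ c) : fmax f ≤ c :=
  sup'_le _ _ fun a _ => h a

lemma fmax_abs_nonneg (f : α → ℝ) : 0 ≤ fmax fun a => |f a| :=
  (abs_nonneg _).trans (le_fmax (fun a => |f a|) (Classical.arbitrary α))

lemma abs_fmax_le (f : α → ℝ) : |fmax f| ≤ fmax fun a => |f a| := by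
  refine abs_le.2 ⟨?_, fmax_le fun a => (le_abs_self _).trans (le_fmax (fun a => |f a|) a)⟩
  obtain a := Classical.arbitrary α
  linarith [neg_abs_le (f a), le_fmax f a, le_fmax (fun a => |f a|) a]

lemma abs_fmax_sub_fmax_le (f g : α → ℝ) : |fmax f - fmax g| ≤ fmax fun a => |f a - g a| := by
  have key : ∀ f g : α → ℝ, fmax f ≤ fmax g + fmax fun a => |f a - g a| := fun f g =>
    fmax_le fun a => by
      linarith [le_fmax g a, le_abs_self (f a - g a), le_fmax (fun a => |f a - g a|) a]
  have hcomm : (fmax fun a => |g a - f a|) = fmax fun a => |f a - g a| := by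
    simp only [abs_sub_comm]
  refine abs_sub_le_iff.2 ⟨?_, ?_⟩ <;> linarith [key f g, key g f, hcomm]

lemma fmax_comp_mk_le [Fintype β] [Nonempty β] (f : α × β → ℝ) (a : α) :
    fmax (fun b => f (a, b)) ≤ fmax f :=
  fmax_le fun b => le_fmax f (a, b)

end fmax

lemma le_div_one_sub_of_le_add_mul {D c γ : ℝ} (hγ : γ < 1) (h : D ≤ c + γ * D) :
    D ≤ c / (1 - γ) := by
  rw [le_div_iff₀ (by linarith)]
  linarith

section Bellman

variable {X Y : Type*} [Fintype X] [Nonempty X] [Fintype Y] [Nonempty Y]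

lemma abs_sum_mul_le_sum_abs_mul_fmax (q u : Y → ℝ) :
    |∑ y, q y * u y| ≤ (∑ y, |q y|) * fmax fun y => |u y| :=
  calc |∑ y, q y * u y| ≤ ∑ y, |q y| * |u y| := by
        simpa only [abs_mul] using abs_sum_le_sum_abs (fun y => q y * u y) univ
    _ ≤ ∑ y, |q y| * fmax fun y => |u y| :=
        sum_le_sum fun y _ => mul_le_mul_of_nonneg_left (le_fmax (fun y => |u y|) y) (abs_nonneg _)
    _ = (∑ y, |q y|) * fmax fun y => |u y| := (sum_mul _ _ _).symm

/-- Simulation lemma. The backed-up values `u`, `w` are `U`, `W` themselves for policy evaluation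
and the state values `fun s => fmax (U (s, ·))` for optimal Q-functions; `hnext` is the
non-expansiveness of that backup. -/
theorem fmax_abs_sub_le_of_bellman (rU rW : X → ℝ) (pU pW : X → Y → ℝ) (U W : X → ℝ)
    (u w : Y → ℝ) {ζR ζP γ B : ℝ}
    (hU : ∀ x, U x = rU x + ∑ y, pU x y * u y) (hW : ∀ x, W x = rW x + ∑ y, pW x y * w y)
    (hnext : ∀ y, |u y - w y| ≤ fmax fun x => |U x - W x|)
    (hr : ∀ x, |rU x - rW x| ≤ ζR) (hp : ∀ x, ∑ y, |pU x y - pW x y| ≤ ζP)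
    (hpW : ∀ x y, 0 ≤ pW x y) (hγ : ∀ x, ∑ y, pW x y ≤ γ) (hγ1 : γ < 1)
    (hB : ∀ y, |u y| ≤ B) :
    (fmax fun x => |U x - W x|) ≤ (ζR + ζP * B) / (1 - γ) := by
  refine le_div_one_sub_of_le_add_mul hγ1 (fmax_le fun x => ?_)
  have hsplit : U x - W x = (rU x - rW x) + ∑ y, (pU x y - pW x y) * u y
      + ∑ y, pW x y * (u y - w y) := by
    rw [hU, hW]
    simp only [sub_mul, mul_sub, sum_sub_distrib]
    ring
  have hmodel : |∑ y, (pU x y - pW x y) * u y| ≤ ζP * B :=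
    (abs_sum_mul_le_sum_abs_mul_fmax _ _).trans <| mul_le_mul (hp x) (fmax_le hB)
      (fmax_abs_nonneg u) ((sum_nonneg fun y _ => abs_nonneg _).trans (hp x))
  have hcontract : |∑ y, pW x y * (u y - w y)| ≤ γ * fmax fun x => |U x - W x| := by
    refine (abs_sum_mul_le_sum_abs_mul_fmax _ _).trans ?_
    simp only [abs_of_nonneg (hpW x _)]
    exact mul_le_mul (hγ x) (fmax_le hnext) (fmax_abs_nonneg _)
      ((sum_nonneg fun y _ => hpW x y).trans (hγ x))
  rw [hsplit]
  linarith [abs_add_three (rU x - rW x) (∑ y, (pU x y - pW x y) * u y)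
    (∑ y, pW x y * (u y - w y)), hr x]

theorem fmax_abs_le_of_bellman (r : X → ℝ) (p : X → Y → ℝ) (U : X → ℝ) (u : Y → ℝ) {R γ : ℝ}
    (hU : ∀ x, U x = r x + ∑ y, p x y * u y) (hnext : ∀ y, |u y| ≤ fmax fun x => |U x|)
    (hr : ∀ x, |r x| ≤ R) (hp : ∀ x y, 0 ≤ p x y) (hγ : ∀ x, ∑ y, p x y ≤ γ) (hγ1 : γ < 1) :
    (fmax fun x => |U x|) ≤ R / (1 - γ) := by
  -- compare `U` with the zero solution of the model with zero reward and zero kernel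
  have h := fmax_abs_sub_le_of_bellman 0 r 0 p 0 U 0 u (ζP := γ) (B := 0)
    (fun x => by simp) hU (by simpa using hnext) (by simpa using hr)
    (fun x => by simpa [abs_of_nonneg (hp x _)] using hγ x) hp hγ hγ1 (fun y => by simp)
  simpa using h

end Bellman

section SMDP

variable {S O : Type*} [Fintype S] [Fintype O] [Nonempty S] [Nonempty O]

theorem abs_fmax_le_of_bellman_optimal (r : S → O → ℝ) (p : S → O → S → ℝ) (Q : S → O → ℝ)
    {R γ : ℝ} (hQ : ∀ s o, Q s o = r s o + ∑ s', p s o s' * fmax (Q s'))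
    (hr : ∀ s o, |r s o| ≤ R) (hp : ∀ s o s', 0 ≤ p s o s') (hγ : ∀ s o, ∑ s', p s o s' ≤ γ)
    (hγ1 : γ < 1) (s : S) :
    |fmax (Q s)| ≤ R / (1 - γ) :=
  (abs_fmax_le _).trans <| (fmax_comp_mk_le (fun so => |Q so.1 so.2|) s).trans <|
    fmax_abs_le_of_bellman _ _ _ (fun s => fmax (Q s)) (fun so => hQ so.1 so.2)
      (fun s => (abs_fmax_le _).trans (fmax_comp_mk_le (fun so => |Q so.1 so.2|) s))
      (fun so => hr so.1 so.2) (fun so => hp so.1 so.2) (fun so => hγ so.1 so.2) hγ1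

theorem abs_fmax_sub_fmax_le_of_bellman_optimal (r rI : S → O → ℝ) (p pI : S → O → S → ℝ)
    (Q QI : S → O → ℝ) {ζR ζP γ B : ℝ}
    (hQ : ∀ s o, Q s o = r s o + ∑ s', p s o s' * fmax (Q s'))
    (hQI : ∀ s o, QI s o = rI s o + ∑ s', pI s o s' * fmax (QI s'))
    (hr : ∀ s o, |r s o - rI s o| ≤ ζR) (hp : ∀ s o, ∑ s', |p s o s' - pI s o s'| ≤ ζP)
    (hpI : ∀ s o s', 0 ≤ pI s o s') (hγ : ∀ s o, ∑ s', pI s o s' ≤ γ) (hγ1 : γ < 1)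
    (hB : ∀ s, |fmax (Q s)| ≤ B) (s : S) :
    |fmax (Q s) - fmax (QI s)| ≤ (ζR + ζP * B) / (1 - γ) :=
  (abs_fmax_sub_fmax_le _ _).trans <|
    (fmax_comp_mk_le (fun so => |Q so.1 so.2 - QI so.1 so.2|) s).trans <|
    fmax_abs_sub_le_of_bellman _ _ _ _ _ _ (fun s => fmax (Q s)) (fun s => fmax (QI s))
      (fun so => hQ so.1 so.2) (fun so => hQI so.1 so.2)
      (fun s => (abs_fmax_sub_fmax_le _ _).trans
        (fmax_comp_mk_le (fun so => |Q so.1 so.2 - QI so.1 so.2|) s))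
      (fun so => hr so.1 so.2) (fun so => hp so.1 so.2) (fun so => hpI so.1 so.2)
      (fun so => hγ so.1 so.2) hγ1 hB

end SMDP

lemma two_mul_simulation_bound_le {ζR ζP R γ γI : ℝ} (hζR : 0 ≤ ζR) (hζP : 0 ≤ ζP) (hR : 0 ≤ R)
    (hγ : γ < 1) (hγI : γI < 1) :
    2 * ((ζR + ζP * (R / (1 - γ))) / (1 - γI))
      ≤ 5 * ζR / (1 - γI) + 4 * R * ζP / ((1 - γI) * (1 - γ)) := by
  have hγ0 : 0 < 1 - γ := by linarith
  have hγI0 : 0 < 1 - γI := by linarith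
  have hsplit : 2 * ((ζR + ζP * (R / (1 - γ))) / (1 - γI))
      = 2 * (ζR / (1 - γI)) + 2 * (R * ζP / ((1 - γI) * (1 - γ))) := by
    field_simp
  have hrhs : 5 * ζR / (1 - γI) + 4 * R * ζP / ((1 - γI) * (1 - γ))
      = 5 * (ζR / (1 - γI)) + 4 * (R * ζP / ((1 - γI) * (1 - γ))) := by
    ring
  rw [hsplit, hrhs]
  linarith [div_nonneg hζR hγI0.le, div_nonneg (mul_nonneg hR hζP) (mul_pos hγI0 hγ0).le]

theorem planning_loss_bound_general {S O : Type*} [Fintype S] [Fintype O] [Nonempty S] [Nonempty O]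
    (r rI : S → O → ℝ) (p pI : S → O → S → ℝ)
    (Rmax γbar γbarI ζR ζP εhat : ℝ)
    (hr0 : ∀ s o, 0 ≤ r s o) (hrR : ∀ s o, r s o ≤ Rmax)
    (hp : ∀ s o s', 0 ≤ p s o s') (hpI : ∀ s o s', 0 ≤ pI s o s')
    (hγ : γbar = fmax (fun so : S × O => ∑ s' : S, p so.1 so.2 s')) (hγlt : γbar < 1)
    (hγI : γbarI = fmax (fun so : S × O => ∑ s' : S, pI so.1 so.2 s')) (hγIlt : γbarI < 1)
    (hζR : fmax (fun so : S × O => |r so.1 so.2 - rI so.1 so.2|) ≤ ζR)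
    (hζP : fmax (fun so : S × O => ∑ s' : S, |p so.1 so.2 s' - pI so.1 so.2 s'|) ≤ ζP)
    (Qstar QI : S → O → ℝ)
    (hQstar : ∀ s o, Qstar s o = r s o + ∑ s' : S, p s o s' * fmax (fun o' => Qstar s' o'))
    (hQI : ∀ s o, QI s o = rI s o + ∑ s' : S, pI s o s' * fmax (fun o' => QI s' o'))
    (πhat : S → O)
    (Vstar VstarMI VhatM VhatMI : S → ℝ)
    (hVstar : ∀ s, Vstar s = fmax (fun o => Qstar s o))
    (hVstarMI : ∀ s, VstarMI s = fmax (fun o => QI s o))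
    (hVhatM : ∀ s, VhatM s = r s (πhat s) + ∑ s' : S, p s (πhat s) s' * VhatM s')
    (hVhatMI : ∀ s, VhatMI s = rI s (πhat s) + ∑ s' : S, pI s (πhat s) s' * VhatMI s')
    (hbound : fmax (fun s : S => |VhatM s|) ≤ Rmax / (1 - γbar))
    (hest : fmax (fun s : S => |VstarMI s - VhatMI s|) ≤ εhat) :
    fmax (fun s : S => |Vstar s - VhatM s|) ≤
      5 * ζR / (1 - γbarI) + 4 * Rmax * ζP / ((1 - γbarI) * (1 - γbar)) + εhat := by
  have hrP : ∀ s o, |r s o - rI s o| ≤ ζR := fun s o => (le_fmax _ (s, o)).trans hζR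
  have hpP : ∀ s o, ∑ s', |p s o s' - pI s o s'| ≤ ζP := fun s o => (le_fmax _ (s, o)).trans hζP
  have hγP : ∀ s o, ∑ s', p s o s' ≤ γbar := fun s o =>
    hγ ▸ le_fmax (fun so : S × O => ∑ s', p so.1 so.2 s') (s, o)
  have hγIP : ∀ s o, ∑ s', pI s o s' ≤ γbarI := fun s o =>
    hγI ▸ le_fmax (fun so : S × O => ∑ s', pI so.1 so.2 s') (s, o)
  set B := Rmax / (1 - γbar)
  have hVstar_le : ∀ s, |fmax (Qstar s)| ≤ B :=
    abs_fmax_le_of_bellman_optimal r p Qstar hQstar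
      (fun s o => abs_le.2 ⟨by linarith [hr0 s o, hrR s o], hrR s o⟩) hp hγP hγlt
  have hV : ∀ s, |Vstar s - VstarMI s| ≤ (ζR + ζP * B) / (1 - γbarI) := fun s => by
    rw [hVstar, hVstarMI]
    exact abs_fmax_sub_fmax_le_of_bellman_optimal r rI p pI Qstar QI hQstar hQI hrP hpP hpI hγIP
      hγIlt hVstar_le s
  have hVhat : (fmax fun s => |VhatM s - VhatMI s|) ≤ (ζR + ζP * B) / (1 - γbarI) :=
    fmax_abs_sub_le_of_bellman _ _ _ _ _ _ VhatM VhatMI hVhatM hVhatMI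
      (fun s => le_fmax (fun s => |VhatM s - VhatMI s|) s)
      (fun s => hrP s (πhat s)) (fun s => hpP s (πhat s)) (fun s => hpI s (πhat s))
      (fun s => hγIP s (πhat s)) hγIlt (fun s => (le_fmax (fun s => |VhatM s|) s).trans hbound)
  obtain ⟨s₀, o₀⟩ := Classical.arbitrary (S × O)
  have hconst := two_mul_simulation_bound_le ((abs_nonneg _).trans (hrP s₀ o₀))
    ((sum_nonneg fun _ _ => abs_nonneg _).trans (hpP s₀ o₀)) ((hr0 s₀ o₀).trans (hrR s₀ o₀))
    hγlt hγIlt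
  refine fmax_le fun s => ?_
  linarith [hV s, (le_fmax (fun s => |VstarMI s - VhatMI s|) s).trans hest,
    (le_fmax (fun s => |VhatM s - VhatMI s|) s).trans hVhat, abs_sub_comm (VhatMI s) (VhatM s),
    abs_sub_le (Vstar s) (VstarMI s) (VhatM s), abs_sub_le (VstarMI s) (VhatMI s) (VhatM s)]

/-- Theorem 2 (trajectory-based planning-loss / certainty-equivalence bound),
deterministic form. -/
theorem planning_loss_bound {S O : Type*} [Fintype S] [Fintype O] [Nonempty S] [Nonempty O]
    (r rI rhat : S → O → ℝ) (p pI phat : S → O → S → ℝ)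
    (Rmax γbar γbarI ζR ζP εhat : ℝ)
    (hr0 : ∀ s o, 0 ≤ r s o) (hrR : ∀ s o, r s o ≤ Rmax)
    (hp : ∀ s o s', 0 ≤ p s o s') (hpI : ∀ s o s', 0 ≤ pI s o s')
    (hphat : ∀ s o s', 0 ≤ phat s o s')
    (hγ : γbar = fmax (fun so : S × O => ∑ s' : S, p so.1 so.2 s')) (hγlt : γbar < 1)
    (hγI : γbarI = fmax (fun so : S × O => ∑ s' : S, pI so.1 so.2 s')) (hγIlt : γbarI < 1)
    (hζR : fmax (fun so : S × O => |r so.1 so.2 - rI so.1 so.2|) ≤ ζR)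
    (hζP : fmax (fun so : S × O => ∑ s' : S, |p so.1 so.2 s' - pI so.1 so.2 s'|) ≤ ζP)
    (Qstar QI : S → O → ℝ)
    (hQstar : ∀ s o, Qstar s o = r s o + ∑ s' : S, p s o s' * fmax (fun o' => Qstar s' o'))
    (hQI : ∀ s o, QI s o = rI s o + ∑ s' : S, pI s o s' * fmax (fun o' => QI s' o'))
    (πI : S → O) (hgreedy : ∀ s, QI s (πI s) = fmax (fun o => QI s o))
    (πhat : S → O)
    (Vstar VstarMI VhatM VhatMI VπIM : S → ℝ)
    (hVstar : ∀ s, Vstar s = fmax (fun o => Qstar s o))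
    (hVstarMI : ∀ s, VstarMI s = fmax (fun o => QI s o))
    (hVhatM : ∀ s, VhatM s = r s (πhat s) + ∑ s' : S, p s (πhat s) s' * VhatM s')
    (hVhatMI : ∀ s, VhatMI s = rI s (πhat s) + ∑ s' : S, pI s (πhat s) s' * VhatMI s')
    (hVπIM : ∀ s, VπIM s = r s (πI s) + ∑ s' : S, p s (πI s) s' * VπIM s')
    (hbound : fmax (fun s : S => |VhatM s|) ≤ Rmax / (1 - γbar))
    (hest : fmax (fun s : S => |VstarMI s - VhatMI s|) ≤ εhat) :
    fmax (fun s : S => |Vstar s - VhatM s|) ≤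
      5 * ζR / (1 - γbarI) + 4 * Rmax * ζP / ((1 - γbarI) * (1 - γbar)) + εhat :=
  planning_loss_bound_general r rI p pI Rmax γbar γbarI ζR ζP εhat hr0 hrR hp hpI hγ hγlt hγI hγIlt
    hζR hζP Qstar QI hQstar hQI πhat Vstar VstarMI VhatM VhatMI hVstar hVstarMI hVhatM hVhatMI
    hbound hest
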